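/- arXiv:1708.04281 — 2 statements merged into one kernel-verified Lean document; each statement's English description precedes it below -/
import Mathlib

section
/- For every t ∈ {0,…,T−1} and every w ∈ [0,∞), the value function is strictly positive: v(t,w) > 0. In particular, for 0 ≤ w ≤ K_t the continuation value strictly exceeds the exercise value max(w − K_t, 0) = 0, so it is never optimal to exercise when the DC balance is at or below the ABO. -/
open MeasureTheory ProbabilityTheory Real

/-- Salary at integer time `t`: `L_t = L₀ · e^{μ_L t}`. -/
noncomputable def salary (L0 μL : ℝ) (t : ℕ) : ℝ := L0 * Real.exp (μL * t)

/-- The ABO `K_t = b · t · L_{t−1} · ä · e^{−r(T−t)}`. -/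
noncomputable def ABO (T : ℕ) (r b aT L0 μL : ℝ) (t : ℕ) : ℝ :=
  b * t * (L0 * Real.exp (μL * ((t : ℝ) - 1))) * aT * Real.exp (-r * ((T : ℝ) - (t : ℝ)))

/-- Auxiliary value function: `bermudanAux n w` is the value at time `t = T − n`
with `n` periods to go, defined by backward induction. -/
noncomputable def bermudanAux (T : ℕ) (r σ μL c b aT L0 : ℝ) : ℕ → ℝ → ℝ
  | 0, w => max (w - ABO T r b aT L0 μL T) 0
  | n + 1, w =>
      max (max (w - ABO T r b aT L0 μL (T - (n + 1))) 0)
        (Real.exp (-r) *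
          ∫ z, bermudanAux T r σ μL c b aT L0 n
              ((w + c * salary L0 μL (T - (n + 1))) * Real.exp (r - σ ^ 2 / 2 + σ * z))
            ∂(gaussianReal 0 1))

/-- The discrete-time value function of the Bermudan DB underpin option:
`v(T,w) = max(w − K_T, 0)` and for `t < T`,
`v(t,w) = max( max(w − K_t, 0), e^{−r} ∫ v(t+1, (w + c·L_t)·e^{r−σ²/2+σz}) γ(dz) )`. -/
noncomputable def bermudanValue (T : ℕ) (r σ μL c b aT L0 : ℝ) (t : ℕ) (w : ℝ) : ℝ :=
  bermudanAux T r σ μL c b aT L0 (T - t) w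


/-! The continuation value at time `t` is `e^{−r}` times the mean of `v(t+1, ·)` at the lognormal
wealth `(w + c·L_t)·e^{r−σ²/2+σZ}`, `Z ~ N(0,1)`. Since `w + c·L_t > 0` and `σ > 0`, this wealth
exceeds any level with positive probability, while by backward induction every `v(n, ·)` is
nonnegative and strictly positive for large wealth; so the mean is positive. The integrals are not
junk zeros because monotonicity (hence measurability) and linear growth of `v(n, ·)` also pass
through the induction. -/

open Filter
open scoped NNReal

def HasLinearGrowth (f : ℝ → ℝ) : Prop :=
  ∃ C, ∀ x, |f x| ≤ C * (1 + |x|)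

namespace HasLinearGrowth

variable {f g : ℝ → ℝ}

lemma max_sub_const_zero (K : ℝ) : HasLinearGrowth fun x => max (x - K) 0 := by
  refine ⟨1 + |K|, fun x => ?_⟩
  rw [abs_of_nonneg (le_max_right _ _)]
  exact max_le (by nlinarith [le_abs_self x, neg_abs_le K, abs_nonneg x, abs_nonneg K])
    (by positivity)

protected lemma max (hf : HasLinearGrowth f) (hg : HasLinearGrowth g) :
    HasLinearGrowth fun x => max (f x) (g x) := by
  obtain ⟨C, hC⟩ := hf
  obtain ⟨D, hD⟩ := hg
  refine ⟨C + D, fun x => ?_⟩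
  calc |max (f x) (g x)| ≤ max |f x| |g x| := abs_max_le_max_abs_abs
    _ ≤ |f x| + |g x| := max_le_add_of_nonneg (abs_nonneg _) (abs_nonneg _)
    _ ≤ (C + D) * (1 + |x|) := by linarith [hC x, hD x]

protected lemma const_mul (hf : HasLinearGrowth f) (a : ℝ) : HasLinearGrowth fun x => a * f x := by
  obtain ⟨C, hC⟩ := hf
  refine ⟨|a| * C, fun x => ?_⟩
  rw [abs_mul, mul_assoc]
  exact mul_le_mul_of_nonneg_left (hC x) (abs_nonneg a)

protected lemma comp_add_const (hf : HasLinearGrowth f) (d : ℝ) :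
    HasLinearGrowth fun x => f (x + d) := by
  obtain ⟨C, hC⟩ := hf
  have hC0 : 0 ≤ C := by simpa using (abs_nonneg _).trans (hC 0)
  refine ⟨C * (1 + |d|), fun x => (hC (x + d)).trans ?_⟩
  nlinarith [abs_add_le x d, abs_nonneg x, abs_nonneg d, mul_nonneg hC0 (abs_nonneg x),
    mul_nonneg (mul_nonneg hC0 (abs_nonneg x)) (abs_nonneg d)]

end HasLinearGrowth

section Lognormal

variable {m : ℝ} {v : ℝ≥0} {f : ℝ → ℝ} (α β : ℝ)

lemma integrable_exp_add_mul_gaussianReal :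
    Integrable (fun z => exp (α + β * z)) (gaussianReal m v) := by
  simpa [exp_add] using (integrable_exp_mul_gaussianReal (μ := m) (v := v) β).const_mul (exp α)

lemma integrable_const_mul_one_add_mul_exp (C a : ℝ) :
    Integrable (fun z => C * (1 + a * exp (α + β * z))) (gaussianReal m v) :=
  ((integrable_const 1).add ((integrable_exp_add_mul_gaussianReal α β).const_mul a)).const_mul C

lemma abs_comp_mul_exp_le {C : ℝ} (hC : ∀ x, |f x| ≤ C * (1 + |x|)) (a z : ℝ) :
    |f (a * exp (α + β * z))| ≤ C * (1 + |a| * exp (α + β * z)) := by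
  simpa [abs_mul, abs_of_pos (exp_pos _)] using hC (a * exp (α + β * z))

lemma Monotone.integrable_comp_mul_exp (hf : Monotone f) (hfg : HasLinearGrowth f) (a : ℝ) :
    Integrable (fun z => f (a * exp (α + β * z))) (gaussianReal m v) := by
  obtain ⟨C, hC⟩ := hfg
  refine Integrable.mono' (integrable_const_mul_one_add_mul_exp α β C |a|)
    (hf.measurable.comp (by fun_prop)).aestronglyMeasurable (ae_of_all _ fun z => ?_)
  exact abs_comp_mul_exp_le α β hC a z

lemma Monotone.integral_comp_mul_exp (hf : Monotone f) (hfg : HasLinearGrowth f) :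
    Monotone fun a => ∫ z, f (a * exp (α + β * z)) ∂gaussianReal m v :=
  fun _ _ hab => integral_mono (hf.integrable_comp_mul_exp α β hfg _)
    (hf.integrable_comp_mul_exp α β hfg _)
    fun _ => hf (mul_le_mul_of_nonneg_right hab (exp_pos _).le)

lemma HasLinearGrowth.integral_comp_mul_exp (hfg : HasLinearGrowth f) :
    HasLinearGrowth fun a => ∫ z, f (a * exp (α + β * z)) ∂gaussianReal m v := by
  obtain ⟨C, hC⟩ := hfg
  have hC0 : 0 ≤ C := by simpa using (abs_nonneg _).trans (hC 0)
  set M := ∫ z, exp (α + β * z) ∂gaussianReal m v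
  have hM0 : 0 ≤ M := integral_nonneg fun _ => (exp_pos _).le
  refine ⟨C * (1 + M), fun a => ?_⟩
  rw [← Real.norm_eq_abs]
  calc ‖∫ z, f (a * exp (α + β * z)) ∂gaussianReal m v‖
      ≤ ∫ z, C * (1 + |a| * exp (α + β * z)) ∂gaussianReal m v :=
        norm_integral_le_of_norm_le (integrable_const_mul_one_add_mul_exp α β C |a|)
          (ae_of_all _ fun z => abs_comp_mul_exp_le α β hC a z)
    _ = C * (1 + |a| * M) := by
        rw [integral_const_mul, integral_add (integrable_const 1)
          ((integrable_exp_add_mul_gaussianReal α β).const_mul |a|), integral_const,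
          integral_const_mul]
        simp [M]
    _ ≤ C * (1 + M) * (1 + |a|) := by
        nlinarith [mul_nonneg hC0 (abs_nonneg a), mul_nonneg (mul_nonneg hC0 hM0) (abs_nonneg a)]

lemma gaussianReal_Ici_pos (hv : v ≠ 0) (x : ℝ) : 0 < gaussianReal m v (Set.Ici x) :=
  pos_iff_ne_zero.mpr fun h => by simpa using gaussianReal_absolutelyContinuous' m hv h

lemma integral_comp_mul_exp_pos (hv : v ≠ 0) (hf0 : 0 ≤ f) (hf : Monotone f)
    (hfg : HasLinearGrowth f) (hpos : ∀ᶠ x in atTop, 0 < f x) (hβ : 0 < β) {a : ℝ} (ha : 0 < a) :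
    0 < ∫ z, f (a * exp (α + β * z)) ∂gaussianReal m v := by
  have hlim : Tendsto (fun z => a * exp (α + β * z)) atTop atTop :=
    (tendsto_exp_atTop.comp (tendsto_atTop_add_const_left _ α
      (tendsto_id.const_mul_atTop hβ))).const_mul_atTop ha
  obtain ⟨z₀, hz₀⟩ := eventually_atTop.mp (hlim.eventually hpos)
  rw [integral_pos_iff_support_of_nonneg (f := fun z => f (a * exp (α + β * z)))
    (fun z => hf0 (a * exp (α + β * z))) (hf.integrable_comp_mul_exp α β hfg a)]
  exact (gaussianReal_Ici_pos hv z₀).trans_le (measure_mono fun z hz => (hz₀ z hz).ne')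

end Lognormal

section Bermudan

variable {T : ℕ} {r σ μL c b aT L0 : ℝ}

lemma bermudanAux_nonneg (n : ℕ) (w : ℝ) : 0 ≤ bermudanAux T r σ μL c b aT L0 n w := by
  cases n with
  | zero => exact le_max_right _ _
  | succ n => exact (le_max_right _ 0).trans (le_max_left _ _)

lemma continuation_le_bermudanAux_succ (n : ℕ) (w : ℝ) :
    exp (-r) * ∫ z, bermudanAux T r σ μL c b aT L0 n
        ((w + c * salary L0 μL (T - (n + 1))) * exp (r - σ ^ 2 / 2 + σ * z))
        ∂gaussianReal 0 1 ≤
      bermudanAux T r σ μL c b aT L0 (n + 1) w :=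
  le_max_right _ _

lemma monotone_max_sub_const_zero (K : ℝ) : Monotone fun x : ℝ => max (x - K) 0 :=
  fun _ _ h => max_le_max (sub_le_sub_right h K) le_rfl

lemma monotone_bermudanAux_and_hasLinearGrowth (n : ℕ) :
    Monotone (bermudanAux T r σ μL c b aT L0 n) ∧
      HasLinearGrowth (bermudanAux T r σ μL c b aT L0 n) := by
  induction n with
  | zero =>
    exact ⟨monotone_max_sub_const_zero _, HasLinearGrowth.max_sub_const_zero _⟩
  | succ n ih =>
    obtain ⟨hmono, hgrowth⟩ := ih
    exact ⟨(monotone_max_sub_const_zero _).max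
        (((hmono.integral_comp_mul_exp _ _ hgrowth).comp
          (monotone_id.add_const _)).const_mul (exp_pos _).le),
      (HasLinearGrowth.max_sub_const_zero _).max
        (((hgrowth.integral_comp_mul_exp _ _).comp_add_const _).const_mul _)⟩

lemma eventually_pos_bermudanAux (hσ : 0 < σ) (n : ℕ) :
    ∀ᶠ w in atTop, 0 < bermudanAux T r σ μL c b aT L0 n w := by
  induction n with
  | zero =>
    filter_upwards [eventually_gt_atTop (ABO T r b aT L0 μL T)] with w hw
    exact (sub_pos.mpr hw).trans_le (le_max_left _ _)
  | succ n ih =>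
    obtain ⟨hmono, hgrowth⟩ := monotone_bermudanAux_and_hasLinearGrowth n
    filter_upwards [eventually_gt_atTop (-(c * salary L0 μL (T - (n + 1))))] with w hw
    refine (mul_pos (exp_pos _) ?_).trans_le (continuation_le_bermudanAux_succ n w)
    exact integral_comp_mul_exp_pos _ _ one_ne_zero (bermudanAux_nonneg n) hmono hgrowth ih hσ
      (by linarith)

lemma integral_bermudanAux_pos (hσ : 0 < σ) (n : ℕ) {a : ℝ} (ha : 0 < a) :
    0 < ∫ z, bermudanAux T r σ μL c b aT L0 n (a * exp (r - σ ^ 2 / 2 + σ * z))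
      ∂gaussianReal 0 1 :=
  integral_comp_mul_exp_pos _ _ one_ne_zero (bermudanAux_nonneg n)
    (monotone_bermudanAux_and_hasLinearGrowth n).1 (monotone_bermudanAux_and_hasLinearGrowth n).2
    (eventually_pos_bermudanAux hσ n) hσ ha

lemma continuation_le_bermudanValue {t : ℕ} (ht : t < T) (w : ℝ) :
    exp (-r) * ∫ z, bermudanValue T r σ μL c b aT L0 (t + 1)
        ((w + c * salary L0 μL t) * exp (r - σ ^ 2 / 2 + σ * z)) ∂gaussianReal 0 1 ≤
      bermudanValue T r σ μL c b aT L0 t w := by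
  have h := continuation_le_bermudanAux_succ (T := T) (r := r) (σ := σ) (μL := μL) (c := c)
    (b := b) (aT := aT) (L0 := L0) (T - (t + 1)) w
  rwa [show T - (T - (t + 1) + 1) = t by omega, ← show T - t = T - (t + 1) + 1 by omega] at h

end Bermudan

theorem bermudanValue_pos_general (T : ℕ) (r σ μL c b aT L0 : ℝ)
    (hσ : 0 < σ) (hc : 0 < c) (hL0 : 0 < L0) (t : ℕ) (ht : t < T) (w : ℝ) (hw : 0 ≤ w) :
    0 < bermudanValue T r σ μL c b aT L0 t w ∧
    (w ≤ ABO T r b aT L0 μL t →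
      max (w - ABO T r b aT L0 μL t) 0 <
        Real.exp (-r) *
          ∫ z, bermudanValue T r σ μL c b aT L0 (t + 1)
              ((w + c * salary L0 μL t) * Real.exp (r - σ ^ 2 / 2 + σ * z))
            ∂(gaussianReal 0 1)) := by
  have ha : 0 < w + c * salary L0 μL t := by unfold salary; positivity
  have hcont : 0 < exp (-r) * ∫ z, bermudanValue T r σ μL c b aT L0 (t + 1)
      ((w + c * salary L0 μL t) * exp (r - σ ^ 2 / 2 + σ * z)) ∂gaussianReal 0 1 :=
    mul_pos (exp_pos _) (integral_bermudanAux_pos hσ _ ha)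
  refine ⟨hcont.trans_le (continuation_le_bermudanValue ht w), fun hwK => ?_⟩
  rwa [max_eq_right (sub_nonpos.mpr hwK)]

/-- For every `t ∈ {0,…,T−1}` and `w ∈ [0,∞)`, `v(t,w) > 0`; in particular, for
`0 ≤ w ≤ K_t` the continuation value strictly exceeds the exercise value
`max(w − K_t, 0) = 0`, so it is never optimal to exercise when the DC balance
is at or below the ABO. -/
theorem bermudanValue_pos (T : ℕ) (hT : 1 ≤ T) (r σ μL c b aT L0 : ℝ)
    (hr : 0 ≤ r) (hσ : 0 < σ) (hμL : 0 ≤ μL) (hc : 0 < c) (hb : 0 < b)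
    (haT : 0 < aT) (hL0 : 0 < L0) (t : ℕ) (ht : t < T) (w : ℝ) (hw : 0 ≤ w) :
    0 < bermudanValue T r σ μL c b aT L0 t w ∧
    (w ≤ ABO T r b aT L0 μL t →
      max (w - ABO T r b aT L0 μL t) 0 <
        Real.exp (-r) *
          ∫ z, bermudanValue T r σ μL c b aT L0 (t + 1)
              ((w + c * salary L0 μL t) * Real.exp (r - σ ^ 2 / 2 + σ * z))
            ∂(gaussianReal 0 1)) :=
  bermudanValue_pos_general T r σ μL c b aT L0 hσ hc hL0 t ht w hw
end

section
/- Optimal switching time for the Florida second election option (deterministic salary, continuous time): let b, ä, c > 0, γ > 0, μ_L, r ∈ ℝ with μ_L ≠ r and μ_L − r + γ ≥ 0, and 0 ≤ t ≤ T. Define g : [t,T] → ℝ by g(s) = (c/(μ_L − r))·(e^{(μ_L−r)(s−t)} − 1) − s·b·ä·e^{(μ_L−r)(s−t)}·e^{−γ(T−s)}. Suppose t' ≥ 0 satisfies c = b·ä·e^{−γ(T−t')}·(1 + t'·(μ_L − r + γ)). Then s* = max(min(T, t'), t) maximizes g on [t,T]: g(s*) ≥ g(s) for all s ∈ [t,T].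 -/
/-!
Writing `A = μL - r`, the derivative of the gain `g` factors as
`g'(s) = exp (A (s - t)) * (c - φ s)` with `φ s = b ä exp (-γ (T - s)) (1 + s (A + γ))`.
Since `γ ≥ 0` and `A + γ ≥ 0`, `φ` is nondecreasing on `[0, ∞)`, and `φ t' = c`; hence `g` is
nondecreasing up to `t'` and nonincreasing after it, so on `[t, T]` it peaks at the clamp of `t'`.
-/

open Real Set

theorem isMaxOn_Icc_of_deriv_nonneg_nonpos {f f' : ℝ → ℝ} {a m b : ℝ} (ham : a ≤ m) (hmb : m ≤ b)
    (hcont : ContinuousOn f (Icc a b)) (hf : ∀ x ∈ Ioo a b, HasDerivAt f (f' x) x)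
    (hinc : ∀ x ∈ Ioo a m, 0 ≤ f' x) (hdec : ∀ x ∈ Ioo m b, f' x ≤ 0) :
    IsMaxOn f (Icc a b) m := by
  intro s ⟨has, hsb⟩
  rcases le_total s m with hsm | hms
  · have hmono : MonotoneOn f (Icc a m) := by
      refine monotoneOn_of_hasDerivWithinAt_nonneg (convex_Icc a m)
        (hcont.mono (Icc_subset_Icc_right hmb)) (fun x hx => ?_) (by rwa [interior_Icc])
      rw [interior_Icc] at hx ⊢
      exact (hf x ⟨hx.1, hx.2.trans_le hmb⟩).hasDerivWithinAt
    exact hmono ⟨has, hsm⟩ ⟨ham, le_rfl⟩ hsm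
  · have hanti : AntitoneOn f (Icc m b) := by
      refine antitoneOn_of_hasDerivWithinAt_nonpos (convex_Icc m b)
        (hcont.mono (Icc_subset_Icc_left ham)) (fun x hx => ?_) (by rwa [interior_Icc])
      rw [interior_Icc] at hx ⊢
      exact (hf x ⟨ham.trans_lt hx.1, hx.2⟩).hasDerivWithinAt
    exact hanti ⟨le_rfl, hmb⟩ ⟨hms, hsb⟩ hms

theorem monotoneOn_mul_exp_mul_one_add {B γ k : ℝ} (hB : 0 ≤ B) (hγ : 0 ≤ γ) (hk : 0 ≤ k)
    (T : ℝ) : MonotoneOn (fun x => B * exp (-γ * (T - x)) * (1 + x * k)) (Ici 0) := by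
  intro x hx y _ hxy
  have hexp : exp (-γ * (T - x)) ≤ exp (-γ * (T - y)) := exp_le_exp.2 (by nlinarith)
  have hx : (0 : ℝ) ≤ 1 + x * k := by nlinarith [mem_Ici.1 hx]
  exact mul_le_mul (mul_le_mul_of_nonneg_left hexp hB) (by nlinarith) hx (by positivity)

/-- The paper's `g(s)`, with `A = μL - r`. -/
noncomputable def switchingGain (A γ b aT c T t s : ℝ) : ℝ :=
  c / A * (exp (A * (s - t)) - 1) - s * b * aT * exp (A * (s - t)) * exp (-γ * (T - s))

theorem hasDerivAt_switchingGain {A : ℝ} (hA : A ≠ 0) (γ b aT c T t x : ℝ) :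
    HasDerivAt (switchingGain A γ b aT c T t)
      (exp (A * (x - t)) * (c - b * aT * exp (-γ * (T - x)) * (1 + x * (A + γ)))) x := by
  have hsalary : HasDerivAt (fun s => exp (A * (s - t))) (exp (A * (x - t)) * A) x := by
    simpa using (((hasDerivAt_id x).sub_const t).const_mul A).exp
  have hdiscount : HasDerivAt (fun s => exp (-γ * (T - s))) (exp (-γ * (T - x)) * γ) x := by
    simpa using (((hasDerivAt_id x).const_sub T).const_mul (-γ)).exp
  have hlinear : HasDerivAt (fun s => s * b * aT) (b * aT) x := by
    simpa using ((hasDerivAt_id x).mul_const b).mul_const aT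
  refine (((hsalary.sub_const 1).const_mul (c / A)).sub
    ((hlinear.mul hsalary).mul hdiscount)).congr_deriv ?_
  simp only [Pi.mul_apply]
  field_simp
  ring

theorem florida_optimal_switching_deterministic_general (r μL γ b aT c T t t' : ℝ)
    (hb : 0 < b) (haT : 0 < aT) (hγ : 0 < γ)
    (hne : μL ≠ r) (hk : 0 ≤ μL - r + γ)
    (ht0 : 0 ≤ t) (htT : t ≤ T) (ht' : 0 ≤ t')
    (hroot : c = b * aT * Real.exp (-γ * (T - t')) * (1 + t' * (μL - r + γ))) :
    ∀ s : ℝ, t ≤ s → s ≤ T →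
      (c / (μL - r)) * (Real.exp ((μL - r) * (s - t)) - 1)
          - s * b * aT * Real.exp ((μL - r) * (s - t)) * Real.exp (-γ * (T - s)) ≤
        (c / (μL - r)) * (Real.exp ((μL - r) * (max (min T t') t - t)) - 1)
          - max (min T t') t * b * aT * Real.exp ((μL - r) * (max (min T t') t - t))
              * Real.exp (-γ * (T - max (min T t') t)) := by
  intro s hts hsT
  have hg := hasDerivAt_switchingGain (sub_ne_zero.2 hne) γ b aT c T t
  have hφ := monotoneOn_mul_exp_mul_one_add (by positivity : 0 ≤ b * aT) hγ.le hk T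
  refine isMaxOn_Icc_of_deriv_nonneg_nonpos (le_max_right _ _) (max_le (min_le_left _ _) htT)
    (fun x _ => (hg x).continuousAt.continuousWithinAt) (fun x _ => hg x) ?_ ?_ ⟨hts, hsT⟩
  · rintro x ⟨htx, hx⟩
    have hxt' : x ≤ t' := (lt_min_iff.1 ((lt_max_iff.1 hx).resolve_right htx.not_gt)).2.le
    refine mul_nonneg (exp_pos _).le (sub_nonneg.2 ?_)
    rw [hroot]
    exact hφ (mem_Ici.2 (ht0.trans htx.le)) (mem_Ici.2 ht') hxt'
  · rintro x ⟨hx, hxT⟩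
    have ht'x : t' < x :=
      (min_lt_iff.1 ((le_max_left _ _).trans_lt hx)).resolve_left (not_lt.2 hxT.le)
    refine mul_nonpos_of_nonneg_of_nonpos (exp_pos _).le (sub_nonpos.2 ?_)
    rw [hroot]
    exact hφ (mem_Ici.2 ht') (mem_Ici.2 (ht'.trans ht'x.le)) ht'x.le

/-- Optimal switching time for the Florida second election option
(deterministic salary, continuous time): with
`g(s) = (c/(μ_L−r))·(e^{(μ_L−r)(s−t)} − 1) − s·b·ä·e^{(μ_L−r)(s−t)}·e^{−γ(T−s)}`
and `t'` a root of `c = b·ä·e^{−γ(T−t')}·(1 + t'·(μ_L − r + γ))`, the clamp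
`s* = max(min(T, t'), t)` maximizes `g` on `[t,T]`. -/
theorem florida_optimal_switching_deterministic (r μL γ b aT c T t t' : ℝ)
    (hb : 0 < b) (haT : 0 < aT) (hc : 0 < c) (hγ : 0 < γ)
    (hne : μL ≠ r) (hk : 0 ≤ μL - r + γ)
    (ht0 : 0 ≤ t) (htT : t ≤ T) (ht' : 0 ≤ t')
    (hroot : c = b * aT * Real.exp (-γ * (T - t')) * (1 + t' * (μL - r + γ))) :
    ∀ s : ℝ, t ≤ s → s ≤ T →
      (c / (μL - r)) * (Real.exp ((μL - r) * (s - t)) - 1)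
          - s * b * aT * Real.exp ((μL - r) * (s - t)) * Real.exp (-γ * (T - s)) ≤
        (c / (μL - r)) * (Real.exp ((μL - r) * (max (min T t') t - t)) - 1)
          - max (min T t') t * b * aT * Real.exp ((μL - r) * (max (min T t') t - t))
              * Real.exp (-γ * (T - max (min T t') t)) :=
  florida_optimal_switching_deterministic_general r μL γ b aT c T t t' hb haT hγ hne hk ht0 htT ht'
    hroot
end
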